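/- In an infinite Fort transformation group (F,G) with ideal I on G, for x ∈ F∖{b}: (x,b) ∈ Asym_I(F,G) if and only if st(x)h ∈ I for every h ∈ G. -/

import Mathlib

open Pointwise

/-- An ideal on (the carrier of) a group `G`. -/
def IsIdealOn {G : Type*} (I : Set (Set G)) : Prop :=
  I.Nonempty ∧ (∀ A ∈ I, ∀ B : Set G, B ⊆ A → B ∈ I) ∧ ∀ A ∈ I, ∀ B ∈ I, A ∪ B ∈ I

/-- The basic entourage `α_D = ((F∖D) × (F∖D)) ∪ Δ_D` of the Fort uniformity. -/
def fortEntourage (F : Type*) (D : Set F) : Set (F × F) :=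
  (Dᶜ ×ˢ Dᶜ) ∪ {p : F × F | p.1 ∈ D ∧ p.1 = p.2}

/-- Asymptoticity modulo an ideal `I` in a Fort transformation group `(F,G)`, expressed via
the generating entourages `α_D` (finite `D ⊆ F∖{b}`) of the unique uniformity of the Fort
space `F` with particular point `b`. -/
def FortAsymMod (G F : Type*) [SMul G F] (b : F) (I : Set (Set G)) (x y : F) : Prop :=
  ∀ D : Set F, D.Finite → b ∉ D → {g : G | (g • x, g • y) ∉ fortEntourage F D} ∈ I

/-!
Since `b` is fixed and lies outside every `D`, the pair `(gx, b)` leaves `α_D` exactly when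
`gx ∈ D`. So asymptoticity says that `{g | gx ∈ D}` is in `I` for every finite `D ∌ b`. Such a
set is a finite union of fibres `{g | gx = a}`, each of which is empty or a coset `h st(x)`;
conversely each coset `h st(x)` is the fibre over `hx ≠ b`, i.e. the set for `D = {hx}`.
-/

namespace IsIdealOn

variable {G : Type*} {I : Set (Set G)}

theorem empty_mem (hI : IsIdealOn I) : (∅ : Set G) ∈ I :=
  let ⟨A, hA⟩ := hI.1
  hI.2.1 A hA ∅ (Set.empty_subset A)

theorem biUnion_mem {ι : Type*} (hI : IsIdealOn I) {s : Set ι} (hs : s.Finite)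
    {t : ι → Set G} (ht : ∀ i ∈ s, t i ∈ I) : ⋃ i ∈ s, t i ∈ I := by
  induction s, hs using Set.Finite.induction_on with
  | empty => simpa using hI.empty_mem
  | @insert i s _ _ ih =>
    rw [Set.biUnion_insert]
    exact hI.2.2 _ (ht i (Set.mem_insert i s)) _
      (ih fun j hj => ht j (Set.mem_insert_of_mem i hj))

end IsIdealOn

theorem notMem_fortEntourage_iff {F : Type*} {D : Set F} {y b : F} (hb : b ∉ D) :
    (y, b) ∉ fortEntourage F D ↔ y ∈ D := by
  simp only [fortEntourage, Set.mem_union, Set.mem_prod, Set.mem_compl_iff, Set.mem_ofPred_eq]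
  constructor
  · intro h
    by_contra hy
    exact h (Or.inl ⟨hy, hb⟩)
  · rintro hy (⟨hy', -⟩ | ⟨-, rfl⟩)
    · exact hy' hy
    · exact hb hy

theorem fortAsymMod_iff_preimage_mem {G F : Type*} [SMul G F] {b : F} (hb : ∀ g : G, g • b = b)
    (I : Set (Set G)) (x : F) :
    FortAsymMod G F b I x b ↔
      ∀ D : Set F, D.Finite → b ∉ D → (fun g : G => g • x) ⁻¹' D ∈ I := by
  refine forall₃_congr fun D _ hbD => ?_
  simp only [hb, notMem_fortEntourage_iff hbD]
  rfl

theorem MulAction.preimage_smul_singleton_smul {G F : Type*} [Group G] [MulAction G F]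
    (x : F) (h : G) :
    (fun g : G => g • x) ⁻¹' {h • x} = h • (MulAction.stabilizer G x : Set G) := by
  ext g
  rw [mem_leftCoset_iff, SetLike.mem_coe, MulAction.mem_stabilizer_iff, mul_smul,
    inv_smul_eq_iff]
  rfl

theorem stmt13_general {F G : Type*} [Group G] [MulAction G F] (b : F)
    (hb : ∀ g : G, g • b = b)
    (I : Set (Set G)) (hI : IsIdealOn I)
    (x : F) (hx : x ≠ b) :
    FortAsymMod G F b I x b ↔
      ∀ h : G, (h • (MulAction.stabilizer G x : Set G)) ∈ I := by
  rw [fortAsymMod_iff_preimage_mem hb]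
  constructor
  · intro hasym h
    have hhx : b ∉ ({h • x} : Set F) := by
      rw [Set.mem_singleton_iff, ← hb h]
      exact fun hbx => hx (MulAction.injective h hbx).symm
    rw [← MulAction.preimage_smul_singleton_smul]
    exact hasym {h • x} (Set.finite_singleton _) hhx
  · intro hcoset D hD _
    rw [← Set.biUnion_preimage_singleton]
    refine hI.biUnion_mem hD fun a _ => ?_
    by_cases ha : ∃ h : G, h • x = a
    · obtain ⟨h, rfl⟩ := ha
      rw [MulAction.preimage_smul_singleton_smul]
      exact hcoset h
    · rw [Set.preimage_eq_empty_iff.mpr (by simpa using ha)]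
      exact hI.empty_mem

/-- In an infinite Fort transformation group `(F,G)` with ideal `I` on `G`, for `x ∈ F∖{b}`:
`(x,b)` is asymptotic modulo `I` iff every translated coset `st(x)h` of the stabilizer of `x`
lies in `I`. -/
theorem stmt13 {F G : Type*} [Group G] [MulAction G F] (b : F) (hF : Infinite F)
    (hb : ∀ g : G, g • b = b)
    (I : Set (Set G)) (hI : IsIdealOn I)
    (x : F) (hx : x ≠ b) :
    FortAsymMod G F b I x b ↔
      ∀ h : G, (h • (MulAction.stabilizer G x : Set G)) ∈ I :=
  stmt13_general b hb I hI x hx
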